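/- Let F₀, F₁, …, F_k : ℝ^n → ℝ^n be C² vector fields that are odd (F_i(−x) = −F_i(x) for all x ∈ ℝ^n and all 0 ≤ i ≤ k) and tangent to the sphere (⟨x, F_i(x)⟩ = 0 for ‖x‖ = 1). Let ρ̂ be a probability measure on S^{n-1} that is invariant for the one-point generator L_X, i.e. ∫ (L_X u) dρ̂ = 0 for every smooth u : ℝ^n → ℝ. Then for every α ∈ [0,1], the probability measure ρ_α on S^{n-1} × S^{n-1} defined as ρ_α := α·(pushforward of ρ̂ under x ↦ (x,x)) + (1−α)·(pushforward of ρ̂ under x ↦ (x,−x)) is invariant for the two-point generator: ∫ (L_{XY} u) dρ_α = 0 for every smooth u : ℝ^n × ℝ^n → ℝ. -/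

import Mathlib

open MeasureTheory RealInnerProductSpace

/-- The one-point generator
`(L_X u)(x) = F₀(x)·∇u(x) + ½ Σᵢ Fᵢ(x)·∇(Fᵢ·∇u)(x)` of the Stratonovich SDE
`dX = F₀(X) dt + Σᵢ Fᵢ(X) ∂Bⁱ`. -/
noncomputable def oneGen {n k : ℕ}
    (F₀ : EuclideanSpace ℝ (Fin n) → EuclideanSpace ℝ (Fin n))
    (F : Fin k → EuclideanSpace ℝ (Fin n) → EuclideanSpace ℝ (Fin n))
    (u : EuclideanSpace ℝ (Fin n) → ℝ) (x : EuclideanSpace ℝ (Fin n)) : ℝ :=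
  fderiv ℝ u x (F₀ x) +
    (1 / 2 : ℝ) * ∑ i, fderiv ℝ (fun y => fderiv ℝ u y (F i y)) x (F i x)

/-- The two-point generator
`(L_{XY} u)(x,y) = F₀(x)·∇ₓu + F₀(y)·∇ᵧu + ½ Σᵢ (Fᵢ(x)·∇ₓ + Fᵢ(y)·∇ᵧ)² u`
of two copies of the SDE driven by the same Brownian motions. -/
noncomputable def twoGen {n k : ℕ}
    (F₀ : EuclideanSpace ℝ (Fin n) → EuclideanSpace ℝ (Fin n))
    (F : Fin k → EuclideanSpace ℝ (Fin n) → EuclideanSpace ℝ (Fin n))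
    (u : EuclideanSpace ℝ (Fin n) × EuclideanSpace ℝ (Fin n) → ℝ)
    (p : EuclideanSpace ℝ (Fin n) × EuclideanSpace ℝ (Fin n)) : ℝ :=
  fderiv ℝ u p (F₀ p.1, F₀ p.2) +
    (1 / 2 : ℝ) * ∑ i,
      fderiv ℝ (fun q => fderiv ℝ u q (F i q.1, F i q.2)) p (F i p.1, F i p.2)


section aux
variable {E : Type*} [NormedAddCommGroup E] [NormedSpace ℝ E]

lemma hasFDerivAt_diag' (x : E) :
    HasFDerivAt (fun y : E => (y, y))
      ((ContinuousLinearMap.id ℝ E).prod (ContinuousLinearMap.id ℝ E)) x :=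
  (hasFDerivAt_id x).prodMk (hasFDerivAt_id x)

lemma hasFDerivAt_anti' (x : E) :
    HasFDerivAt (fun y : E => (y, -y))
      ((ContinuousLinearMap.id ℝ E).prod (-(ContinuousLinearMap.id ℝ E))) x :=
  (hasFDerivAt_id x).prodMk (hasFDerivAt_id x).neg

lemma fderiv_comp_diag {u : E × E → ℝ} (hu : Differentiable ℝ u) (x w : E) :
    fderiv ℝ (fun y => u (y, y)) x w = fderiv ℝ u (x, x) (w, w) := by
  have h : HasFDerivAt (u ∘ fun y : E => (y, y))
      ((fderiv ℝ u (x, x)).comp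
        ((ContinuousLinearMap.id ℝ E).prod (ContinuousLinearMap.id ℝ E))) x :=
    HasFDerivAt.comp (f := fun y : E => (y, y)) x (hu (x, x)).hasFDerivAt (hasFDerivAt_diag' x)
  rw [show (fun y : E => u (y, y)) = u ∘ (fun y => (y, y)) from rfl, h.fderiv]; rfl

lemma fderiv_comp_anti {u : E × E → ℝ} (hu : Differentiable ℝ u) (x w : E) :
    fderiv ℝ (fun y => u (y, -y)) x w = fderiv ℝ u (x, -x) (w, -w) := by
  have h : HasFDerivAt (u ∘ fun y : E => (y, -y))
      ((fderiv ℝ u (x, -x)).comp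
        ((ContinuousLinearMap.id ℝ E).prod (-(ContinuousLinearMap.id ℝ E)))) x :=
    HasFDerivAt.comp (f := fun y : E => (y, -y)) x (hu (x, -x)).hasFDerivAt (hasFDerivAt_anti' x)
  rw [show (fun y : E => u (y, -y)) = u ∘ (fun y => (y, -y)) from rfl, h.fderiv]; rfl
end aux

section aux2
variable {n k : ℕ}
local notation "V" => EuclideanSpace ℝ (Fin n)

lemma g_contDiff {u : V × V → ℝ} (hu : ContDiff ℝ (⊤ : ℕ∞) u)
    {G : V → V} (hG : ContDiff ℝ 2 G) :
    ContDiff ℝ 2 (fun q : V × V => fderiv ℝ u q (G q.1, G q.2)) :=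
  (hu.fderiv_right (m := 2) (by norm_cast)).clm_apply
    ((hG.comp contDiff_fst).prodMk (hG.comp contDiff_snd))

lemma two_eq_one_diag (F₀ : V → V) (F : Fin k → V → V)
    (hF : ∀ i, ContDiff ℝ 2 (F i))
    {u : V × V → ℝ} (hu : ContDiff ℝ (⊤ : ℕ∞) u) (x : V) :
    twoGen F₀ F u (x, x) = oneGen F₀ F (fun y => u (y, y)) x := by
  have hud : Differentiable ℝ u := hu.differentiable (by simp)
  unfold twoGen oneGen
  congr 1
  · exact (fderiv_comp_diag hud x (F₀ x)).symm
  · congr 1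
    refine Finset.sum_congr rfl fun i _ => ?_
    set g : V × V → ℝ := fun q => fderiv ℝ u q (F i q.1, F i q.2) with hgdef
    have hg : ContDiff ℝ 2 g := g_contDiff hu (hF i)
    have h1 : (fun y : V => fderiv ℝ (fun z : V => u (z, z)) y (F i y))
        = fun y : V => g (y, y) := funext fun y => fderiv_comp_diag hud y (F i y)
    rw [h1]
    exact (fderiv_comp_diag (hg.differentiable (by norm_num)) x (F i x)).symm

lemma two_eq_one_anti (F₀ : V → V) (F : Fin k → V → V)
    (hF : ∀ i, ContDiff ℝ 2 (F i))
    (hodd₀ : ∀ x, F₀ (-x) = -F₀ x) (hodd : ∀ i x, F i (-x) = -F i x)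
    {u : V × V → ℝ} (hu : ContDiff ℝ (⊤ : ℕ∞) u) (x : V) :
    twoGen F₀ F u (x, -x) = oneGen F₀ F (fun y => u (y, -y)) x := by
  have hud : Differentiable ℝ u := hu.differentiable (by simp)
  unfold twoGen oneGen
  congr 1
  · rw [fderiv_comp_anti hud x (F₀ x)]
    simp only [hodd₀ x]
  · congr 1
    refine Finset.sum_congr rfl fun i _ => ?_
    set g : V × V → ℝ := fun q => fderiv ℝ u q (F i q.1, F i q.2) with hgdef
    have hg : ContDiff ℝ 2 g := g_contDiff hu (hF i)
    have h1 : (fun y : V => fderiv ℝ (fun z : V => u (z, -z)) y (F i y))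
        = fun y : V => g (y, -y) := by
      funext y
      rw [fderiv_comp_anti hud y (F i y), hgdef]
      simp only [hodd i y]
    rw [h1, fderiv_comp_anti (hg.differentiable (by norm_num)) x (F i x)]
    simp only [hodd i x]

lemma twoGen_continuous (F₀ : V → V) (F : Fin k → V → V)
    (hF₀ : ContDiff ℝ 2 F₀) (hF : ∀ i, ContDiff ℝ 2 (F i))
    {u : V × V → ℝ} (hu : ContDiff ℝ (⊤ : ℕ∞) u) :
    Continuous (twoGen F₀ F u) := by
  unfold twoGen
  refine ((g_contDiff hu hF₀).continuous).add (continuous_const.mul ?_)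
  refine continuous_finset_sum _ fun i _ => ?_
  have hg : ContDiff ℝ 2 (fun q : V × V => fderiv ℝ u q (F i q.1, F i q.2)) :=
    g_contDiff hu (hF i)
  have : ContDiff ℝ 1 (fun p : V × V =>
      fderiv ℝ (fun q : V × V => fderiv ℝ u q (F i q.1, F i q.2)) p (F i p.1, F i p.2)) :=
    (hg.fderiv_right (m := 1) (by norm_num)).clm_apply
      ((((hF i).of_le one_le_two).comp contDiff_fst).prodMk
        (((hF i).of_le one_le_two).comp contDiff_snd))
  exact this.continuous

lemma integrable_sphere (ρ : Measure V) [IsProbabilityMeasure ρ]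
    (hsupp : ρ {x : V | ‖x‖ ≠ 1} = 0)
    {f : V → ℝ} (hf : Continuous f) : Integrable f ρ := by
  obtain ⟨C, hC⟩ := (isCompact_sphere (0 : V) 1).exists_bound_of_continuousOn
    hf.continuousOn
  have hae : ∀ᵐ x ∂ρ, ‖x‖ = 1 := by
    rw [ae_iff]
    convert hsupp using 2
  refine (integrable_const C).mono' hf.aestronglyMeasurable ?_
  filter_upwards [hae] with x hx
  simpa using hC x (by simp [mem_sphere_iff_norm, hx])
end aux2

/-- **Invariant measures of a symmetric two-point process.**
Let `F₀, …, F_k` be `C²` odd vector fields tangent to the unit sphere, and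
let `ρ̂` be a probability measure on `S^{n-1}` invariant for the one-point
generator.  Then for every `α ∈ [0,1]` the measure
`ρ_α = α (x ↦ (x,x))_*ρ̂ + (1-α)(x ↦ (x,-x))_*ρ̂` is invariant for the
two-point generator. -/
theorem stmt11 {n k : ℕ} (hn : 2 ≤ n)
    (F₀ : EuclideanSpace ℝ (Fin n) → EuclideanSpace ℝ (Fin n))
    (F : Fin k → EuclideanSpace ℝ (Fin n) → EuclideanSpace ℝ (Fin n))
    (hF₀ : ContDiff ℝ 2 F₀) (hF : ∀ i, ContDiff ℝ 2 (F i))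
    (hodd₀ : ∀ x, F₀ (-x) = -F₀ x) (hodd : ∀ i x, F i (-x) = -F i x)
    (htan₀ : ∀ x : EuclideanSpace ℝ (Fin n), ‖x‖ = 1 → ⟪x, F₀ x⟫ = 0)
    (htan : ∀ i, ∀ x : EuclideanSpace ℝ (Fin n), ‖x‖ = 1 → ⟪x, F i x⟫ = 0)
    (ρ : Measure (EuclideanSpace ℝ (Fin n))) [IsProbabilityMeasure ρ]
    (hsupp : ρ {x : EuclideanSpace ℝ (Fin n) | ‖x‖ ≠ 1} = 0)
    (hinv : ∀ u : EuclideanSpace ℝ (Fin n) → ℝ, ContDiff ℝ (⊤ : ℕ∞) u →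
      ∫ x, oneGen F₀ F u x ∂ρ = 0)
    (α : ℝ) (hα : α ∈ Set.Icc (0 : ℝ) 1) :
    ∀ u : EuclideanSpace ℝ (Fin n) × EuclideanSpace ℝ (Fin n) → ℝ,
      ContDiff ℝ (⊤ : ℕ∞) u →
      ∫ p, twoGen F₀ F u p
        ∂(ENNReal.ofReal α •
            Measure.map (fun x : EuclideanSpace ℝ (Fin n) => (x, x)) ρ +
          ENNReal.ofReal (1 - α) •
            Measure.map (fun x : EuclideanSpace ℝ (Fin n) => (x, -x)) ρ) = 0 := by
  intro u hu
  have hc : Continuous (twoGen F₀ F u) := twoGen_continuous F₀ F hF₀ hF hu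
  have hd : Measurable (fun x : EuclideanSpace ℝ (Fin n) => (x, x)) :=
    measurable_id.prodMk measurable_id
  have ha : Measurable (fun x : EuclideanSpace ℝ (Fin n) => (x, -x)) :=
    measurable_id.prodMk measurable_id.neg
  have hfd : Integrable (twoGen F₀ F u)
      (Measure.map (fun x : EuclideanSpace ℝ (Fin n) => (x, x)) ρ) := by
    rw [integrable_map_measure hc.aestronglyMeasurable hd.aemeasurable]
    exact integrable_sphere ρ hsupp (hc.comp (continuous_id.prodMk continuous_id))
  have hfa : Integrable (twoGen F₀ F u)
      (Measure.map (fun x : EuclideanSpace ℝ (Fin n) => (x, -x)) ρ) := by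
    rw [integrable_map_measure hc.aestronglyMeasurable ha.aemeasurable]
    exact integrable_sphere ρ hsupp (hc.comp (continuous_id.prodMk continuous_id.neg))
  rw [integral_add_measure (hfd.smul_measure ENNReal.ofReal_ne_top)
      (hfa.smul_measure ENNReal.ofReal_ne_top),
    integral_smul_measure, integral_smul_measure,
    integral_map hd.aemeasurable hc.aestronglyMeasurable,
    integral_map ha.aemeasurable hc.aestronglyMeasurable]
  have e1 : ∫ x, twoGen F₀ F u (x, x) ∂ρ = 0 := by
    simp only [two_eq_one_diag F₀ F hF hu]
    exact hinv _ (hu.comp (contDiff_id.prodMk contDiff_id))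
  have e2 : ∫ x, twoGen F₀ F u (x, -x) ∂ρ = 0 := by
    simp only [two_eq_one_anti F₀ F hF hodd₀ hodd hu]
    exact hinv _ (hu.comp (contDiff_id.prodMk contDiff_id.neg))
  simp [e1, e2]
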